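/- For the tamed scheme applied to the n-layer neural network with the weaker choice r ≥ (n+1)/2: for λ ∈ (0,1] small enough, the tamed updating function H(θ, y) = ∇_θ U(θ, y) / (1 + √λ |θ|^{2r}) satisfies a dissipativity condition with a quartic environment term, i.e., there exist constants Δ > 0 and C > 0 such that ⟨H(θ, y), θ⟩ ≥ Δ|θ|² − C(1 + |y|⁴) for all θ ∈ ℝ^d and y ∈ ℝ^m. -/

import Mathlib

open scoped RealInnerProductSpace

/-- The index set of the parameter θ = (W₁, …, W_n) of an n-layer network with layer
dimensions dims 0, dims 1, …, dims n : the weight matrix Wᵢ₊₁ ∈ ℝ^{dims (i+1) × dims i}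
is indexed by the fiber over i : Fin n. -/
abbrev NetIdx (n : ℕ) (dims : ℕ → ℕ) : Type :=
  (i : Fin n) × (Fin (dims (i.1 + 1)) × Fin (dims i.1))

/-- The forward pass through the first k layers of the network:
a_0 = z, a_{k+1} = s_{k+1}(W_{k+1} a_k). -/
noncomputable def mlForward (n : ℕ) (dims : ℕ → ℕ) (sact : ℕ → ℝ → ℝ)
    (θ : EuclideanSpace ℝ (NetIdx n dims)) (z : EuclideanSpace ℝ (Fin (dims 0))) :
    (k : ℕ) → Fin (dims k) → ℝ
  | 0 => z
  | (k + 1) => fun j =>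
      if hk : k < n then
        sact (k + 1) (∑ i : Fin (dims k), θ ⟨⟨k, hk⟩, (j, i)⟩ * mlForward n dims sact θ z k i)
      else 0

/-- The n-layer network prediction h(z, θ) = s_n(W_n s_{n-1}(⋯ s_1(W_1 z))). -/
noncomputable def mlNet (n : ℕ) (dims : ℕ → ℕ) (sact : ℕ → ℝ → ℝ)
    (θ : EuclideanSpace ℝ (NetIdx n dims)) (z : EuclideanSpace ℝ (Fin (dims 0))) :
    EuclideanSpace ℝ (Fin (dims n)) :=
  WithLp.toLp 2 (fun j => mlForward n dims sact θ z n j)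

/-- The squared loss |h(z,θ) − l|² of the n-layer network, as a function of θ, with
the data point y = (z, l) given in concatenated form. -/
noncomputable def mlLabel (n : ℕ) (dims : ℕ → ℕ)
    (y : EuclideanSpace ℝ (Fin (dims 0) ⊕ Fin (dims n))) :
    EuclideanSpace ℝ (Fin (dims n)) :=
  WithLp.toLp 2 (fun j => y (Sum.inr j))

noncomputable def mlLoss (n : ℕ) (dims : ℕ → ℕ) (sact : ℕ → ℝ → ℝ)
    (y : EuclideanSpace ℝ (Fin (dims 0) ⊕ Fin (dims n)))
    (θ : EuclideanSpace ℝ (NetIdx n dims)) : ℝ :=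
  ‖mlNet n dims sact θ (WithLp.toLp 2 (fun i => y (Sum.inl i))) - mlLabel n dims y‖ ^ 2


/-- The regularized loss U(θ, y) = |h(z,θ) − l|² + (η/(2(r+1)))|θ|^{2(r+1)}. -/
noncomputable def mlRegLoss (n : ℕ) (dims : ℕ → ℕ) (sact : ℕ → ℝ → ℝ) (η r : ℝ)
    (y : EuclideanSpace ℝ (Fin (dims 0) ⊕ Fin (dims n)))
    (θ : EuclideanSpace ℝ (NetIdx n dims)) : ℝ :=
  mlLoss n dims sact y θ + (η / (2 * (r + 1))) * ‖θ‖ ^ (2 * (r + 1))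

/-- The tamed updating function H(θ, y) = ∇_θ U(θ, y) / (1 + √λ |θ|^{2r}). -/
noncomputable def tamedH (n : ℕ) (dims : ℕ → ℕ) (sact : ℕ → ℝ → ℝ) (η r lam : ℝ)
    (θ : EuclideanSpace ℝ (NetIdx n dims))
    (y : EuclideanSpace ℝ (Fin (dims 0) ⊕ Fin (dims n))) :
    EuclideanSpace ℝ (NetIdx n dims) :=
  (1 + Real.sqrt lam * ‖θ‖ ^ (2 * r))⁻¹ • gradient (mlRegLoss n dims sact η r y) θ

/-!
In `⟪∇U(θ), θ⟫` the regulariser contributes `η ‖θ‖^{2r+2}`, while the loss term is bounded below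
by `-C₀ (1 + |y|)² (1 + ‖θ‖^{n+1}) ‖θ‖`, and `n + 1 ≤ 2r` makes this at least
`-2 C₀ (1 + |y|)² ‖θ‖ (1 + ‖θ‖^{2r})`. Dividing by the taming factor
`1 + √λ ‖θ‖^{2r} ≤ 1 + ‖θ‖^{2r}` still leaves `η ‖θ‖²` up to lower-order terms, and Young's inequality splits
the cross term `(1 + |y|)² ‖θ‖` into a small multiple of `‖θ‖²` and the quartic `(1 + |y|)⁴`.
-/

lemma Real.rpow_le_one_add_rpow {a u t : ℝ} (ha : 0 ≤ a) (hu : 0 ≤ u) (hut : u ≤ t) :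
    a ^ u ≤ 1 + a ^ t := by
  rcases le_total a 1 with h | h
  · linarith [Real.rpow_le_one ha h hu, Real.rpow_nonneg ha t]
  · linarith [Real.rpow_le_rpow_of_exponent_le h hut]

lemma one_add_pow_four_le {b : ℝ} (hb : 0 ≤ b) : (1 + b) ^ 4 ≤ 8 * (1 + b ^ 4) := by
  have := add_pow_le zero_le_one hb 4
  norm_num at this
  linarith

lemma two_mul_mul_le_add_div {c a η : ℝ} (hη : 0 < η) :
    2 * c * a ≤ η / 4 * a ^ 2 + 4 * c ^ 2 / η := by
  have key : η / 4 * a ^ 2 + 4 * c ^ 2 / η - 2 * c * a = (η * a / 2 - 2 * c) ^ 2 / η := by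
    field_simp
    ring
  linarith [div_nonneg (sq_nonneg (η * a / 2 - 2 * c)) hη.le]

/-- Read `a = ‖θ‖`, `A = ‖θ‖^{2r}`, `P = ‖θ‖^p`, `s = √λ`, and `G` for the loss part of
`⟪∇U(θ), θ⟫`. -/
lemma tamed_dissipativity_scalar {a A P c η s G : ℝ} (ha : 0 ≤ a) (hA : 0 ≤ A) (hc : 0 ≤ c)
    (hη : 0 < η) (hs : 0 < s) (hs1 : s ≤ 1) (haA : a ^ 2 ≤ 1 + A * a ^ 2) (hP : P ≤ 1 + A)
    (hG : -(c * (1 + P) * a) ≤ G) :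
    η / 4 * a ^ 2 - (4 * c ^ 2 / (η * s) + η / 2) ≤ (1 + s * A)⁻¹ * (G + η * A * a ^ 2) := by
  set K := 4 * c ^ 2 / η with hK
  have hKs : 4 * c ^ 2 / (η * s) = K / s := by rw [hK, div_div]
  have hKK : K ≤ K / s := le_div_self (by positivity) hs hs1
  have hcP : c * (1 + P) * a ≤ (1 + A) * (2 * c * a) := by
    have : 1 + P ≤ 2 * (1 + A) := by linarith
    nlinarith [mul_nonneg hc ha]
  have hyoung : (1 + A) * (2 * c * a) ≤ (1 + A) * (η / 4 * a ^ 2 + K) :=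
    mul_le_mul_of_nonneg_left (two_mul_mul_le_add_div hη) (by positivity)
  have hsA : η * (s * (A * a ^ 2)) ≤ η * (A * a ^ 2) :=
    mul_le_mul_of_nonneg_left (mul_le_of_le_one_left (by positivity) hs1) hη.le
  have hsK : K / s * (s * A) = K * A := by field_simp
  rw [hKs, inv_mul_eq_div, le_div_iff₀ (by positivity)]
  linarith [mul_nonneg (by positivity : 0 ≤ η / 2 * s) hA, mul_le_mul_of_nonneg_left haA hη.le]

section Gradient

variable {E : Type*} [NormedAddCommGroup E] [InnerProductSpace ℝ E]

lemma fderiv_norm_rpow_apply_self (x : E) {q : ℝ} (hq : 1 < q) :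
    fderiv ℝ (fun x : E ↦ ‖x‖ ^ q) x x = q * ‖x‖ ^ q := by
  rw [fderiv_norm_rpow x hq, smul_apply, innerSL_apply_apply,
    real_inner_self_eq_norm_sq, smul_eq_mul, mul_assoc,
    ← Real.rpow_add_natCast' (norm_nonneg x) (by push_cast; linarith)]
  norm_num

variable [CompleteSpace E]

lemma inner_gradient_add_norm_rpow_self {f : E → ℝ} {x : E} (hf : DifferentiableAt ℝ f x)
    (κ : ℝ) {q : ℝ} (hq : 1 < q) :
    ⟪gradient (fun x ↦ f x + κ * ‖x‖ ^ q) x, x⟫ = ⟪gradient f x, x⟫ + κ * q * ‖x‖ ^ q := by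
  have hnorm := differentiable_norm_rpow (E := E) hq x
  simp only [inner_gradient_left]
  rw [fderiv_fun_add hf (hnorm.const_mul κ), fderiv_const_mul hnorm, add_apply, smul_apply,
    fderiv_norm_rpow_apply_self x hq, smul_eq_mul, mul_assoc]

lemma neg_le_inner_gradient_self {f : E → ℝ} {x : E} {c p : ℝ}
    (hgrad : ‖gradient f x‖ ≤ c * (1 + p)) :
    -(c * (1 + p) * ‖x‖) ≤ ⟪gradient f x, x⟫ :=
  le_trans (neg_le_neg (mul_le_mul_of_nonneg_right hgrad (norm_nonneg x)))
    (neg_le_of_abs_le (abs_real_inner_le_norm _ _))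

theorem inner_tamed_gradient_self_ge {f : E → ℝ} {x : E} (hf : DifferentiableAt ℝ f x)
    {c η r s : ℝ} {p : ℕ} (hc : 0 ≤ c) (hη : 0 < η) (hpr : (p : ℝ) ≤ 2 * r)
    (hs : 0 < s) (hs1 : s ≤ 1) (hgrad : ‖gradient f x‖ ≤ c * (1 + ‖x‖ ^ p)) :
    η / 4 * ‖x‖ ^ 2 - (4 * c ^ 2 / (η * s) + η / 2) ≤
      ⟪(1 + s * ‖x‖ ^ (2 * r))⁻¹ •
        gradient (fun x ↦ f x + η / (2 * (r + 1)) * ‖x‖ ^ (2 * (r + 1))) x, x⟫ := by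
  have hr : 0 ≤ r := by linarith [Nat.cast_nonneg (α := ℝ) p]
  have hx := norm_nonneg x
  have hsplit : ‖x‖ ^ (2 * r + (2 : ℕ)) = ‖x‖ ^ (2 * r) * ‖x‖ ^ 2 :=
    Real.rpow_add_natCast' hx (by positivity)
  have hreg : η / (2 * (r + 1)) * (2 * (r + 1)) * ‖x‖ ^ (2 * (r + 1))
      = η * ‖x‖ ^ (2 * r) * ‖x‖ ^ 2 := by
    rw [div_mul_cancel₀ _ (by positivity), mul_assoc, ← hsplit]
    congr 2
    push_cast
    ring
  rw [real_inner_smul_left, inner_gradient_add_norm_rpow_self hf _ (by linarith), hreg]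
  refine tamed_dissipativity_scalar hx (by positivity) hc hη hs hs1 ?_ ?_
    (neg_le_inner_gradient_self hgrad)
  · rw [← hsplit, ← Real.rpow_natCast]
    exact Real.rpow_le_one_add_rpow hx (by positivity) (by push_cast; linarith)
  · rw [← Real.rpow_natCast]
    exact Real.rpow_le_one_add_rpow hx (by positivity) hpr

end Gradient

lemma mlForward_differentiable {n : ℕ} {dims : ℕ → ℕ} {sact : ℕ → ℝ → ℝ}
    (hsact : ∀ i, 1 ≤ i → i ≤ n → Differentiable ℝ (sact i))
    (z : EuclideanSpace ℝ (Fin (dims 0))) (k : ℕ) (j : Fin (dims k)) :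
    Differentiable ℝ fun θ : EuclideanSpace ℝ (NetIdx n dims) ↦ mlForward n dims sact θ z k j := by
  induction k with
  | zero => exact differentiable_const _
  | succ k ih =>
    by_cases hk : k < n
    · simp only [mlForward, dif_pos hk]
      have := hsact (k + 1) (by omega) (by omega)
      fun_prop
    · simp only [mlForward, dif_neg hk]
      exact differentiable_const _

lemma mlLoss_differentiable {n : ℕ} {dims : ℕ → ℕ} {sact : ℕ → ℝ → ℝ}
    (hsact : ∀ i, 1 ≤ i → i ≤ n → Differentiable ℝ (sact i))
    (y : EuclideanSpace ℝ (Fin (dims 0) ⊕ Fin (dims n))) :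
    Differentiable ℝ (mlLoss n dims sact y) := by
  have hnet : Differentiable ℝ fun θ ↦ mlNet n dims sact θ (WithLp.toLp 2 fun i ↦ y (.inl i)) :=
    (EuclideanSpace.equiv _ ℝ).symm.differentiable.comp
      (differentiable_pi.2 (mlForward_differentiable hsact _ n))
  exact (hnet.sub_const _).norm_sq ℝ

theorem tamed_scheme_dissipativity_quartic_general
    (n : ℕ) (dims : ℕ → ℕ)
    (sact : ℕ → ℝ → ℝ)
    (hsdiff : ∀ i, 1 ≤ i → i ≤ n → ContDiff ℝ 1 (sact i))
    -- the known polynomial bound on the gradient of the unregularized loss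
    (C₀ : ℝ) (hC₀ : 0 < C₀)
    (hgradbd : ∀ (θ : EuclideanSpace ℝ (NetIdx n dims))
        (y : EuclideanSpace ℝ (Fin (dims 0) ⊕ Fin (dims n))),
        ‖gradient (mlLoss n dims sact y) θ‖ ≤ C₀ * (1 + ‖y‖) ^ 2 * (1 + ‖θ‖ ^ (n + 1)))
    (η : ℝ) (hη : 0 < η) (r : ℝ) (hr : ((n : ℝ) + 1) / 2 ≤ r) :
    ∃ lam₀ > (0 : ℝ), ∀ lam : ℝ, 0 < lam → lam ≤ lam₀ → lam ≤ 1 →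
      ∃ Δ > (0 : ℝ), ∃ C > (0 : ℝ),
        ∀ (θ : EuclideanSpace ℝ (NetIdx n dims))
          (y : EuclideanSpace ℝ (Fin (dims 0) ⊕ Fin (dims n))),
          ⟪tamedH n dims sact η r lam θ y, θ⟫
            ≥ Δ * ‖θ‖ ^ 2 - C * (1 + ‖y‖ ^ 4) := by
  refine ⟨1, one_pos, fun lam hlam _ hlam1 => ?_⟩
  have hs : 0 < √lam := Real.sqrt_pos.mpr hlam
  have hs1 : √lam ≤ 1 := Real.sqrt_le_one.mpr hlam1
  refine ⟨η / 4, by positivity, 32 * C₀ ^ 2 / (η * √lam) + η / 2, by positivity, fun θ y => ?_⟩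
  have hdiff := mlLoss_differentiable (fun i h₁ h₂ ↦ (hsdiff i h₁ h₂).differentiable one_ne_zero) y
  have hdiss := inner_tamed_gradient_self_ge (hdiff θ) (c := C₀ * (1 + ‖y‖) ^ 2) (r := r)
    (p := n + 1) (by positivity) hη (by push_cast; linarith) hs hs1 (hgradbd θ y)
  have henv : 4 * (C₀ * (1 + ‖y‖) ^ 2) ^ 2 / (η * √lam) + η / 2
      ≤ (32 * C₀ ^ 2 / (η * √lam) + η / 2) * (1 + ‖y‖ ^ 4) := by
    have hy4 := mul_le_mul_of_nonneg_left (one_add_pow_four_le (norm_nonneg y)) (sq_nonneg C₀)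
    rw [add_mul, div_mul_eq_mul_div]
    exact add_le_add (div_le_div_of_nonneg_right (by linarith) (by positivity))
      (le_mul_of_one_le_right (by positivity) (by linarith [pow_nonneg (norm_nonneg y) 4]))
  exact (sub_le_sub_left henv _).trans hdiss

/-- remark after Lemma 6 of the paper: for the tamed scheme applied to
the n-layer network with the weaker choice r ≥ (n+1)/2, for λ ∈ (0,1] small enough
the tamed updating function satisfies a dissipativity condition with a quartic
environment term: ⟨H(θ,y), θ⟩ ≥ Δ|θ|² − C(1 + |y|⁴) for some Δ > 0, C > 0. -/
theorem tamed_scheme_dissipativity_quartic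
    (n : ℕ) (hn : 1 < n) (dims : ℕ → ℕ) (hdims : ∀ i ≤ n, 0 < dims i)
    (sact : ℕ → ℝ → ℝ) (Ms : ℝ)
    (hsdiff : ∀ i, 1 ≤ i → i ≤ n → ContDiff ℝ 1 (sact i))
    (hsbd : ∀ i, 1 ≤ i → i ≤ n → ∀ x, |sact i x| ≤ Ms)
    (hs'bd : ∀ i, 1 ≤ i → i ≤ n → ∀ x, |deriv (sact i) x| ≤ Ms)
    -- the known polynomial bound on the gradient of the unregularized loss
    (C₀ : ℝ) (hC₀ : 0 < C₀)
    (hgradbd : ∀ (θ : EuclideanSpace ℝ (NetIdx n dims))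
        (y : EuclideanSpace ℝ (Fin (dims 0) ⊕ Fin (dims n))),
        ‖gradient (mlLoss n dims sact y) θ‖ ≤ C₀ * (1 + ‖y‖) ^ 2 * (1 + ‖θ‖ ^ (n + 1)))
    (η : ℝ) (hη : 0 < η) (r : ℝ) (hr : ((n : ℝ) + 1) / 2 ≤ r) :
    ∃ lam₀ > (0 : ℝ), ∀ lam : ℝ, 0 < lam → lam ≤ lam₀ → lam ≤ 1 →
      ∃ Δ > (0 : ℝ), ∃ C > (0 : ℝ),
        ∀ (θ : EuclideanSpace ℝ (NetIdx n dims))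
          (y : EuclideanSpace ℝ (Fin (dims 0) ⊕ Fin (dims n))),
          ⟪tamedH n dims sact η r lam θ y, θ⟫
            ≥ Δ * ‖θ‖ ^ 2 - C * (1 + ‖y‖ ^ 4) :=
  tamed_scheme_dissipativity_quartic_general n dims sact hsdiff C₀ hC₀ hgradbd η hη r hr
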